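/- Let w_2, w_3 > 0 with 4w_2 ≥ 3w_3, and define α*_3 = (2w_2 − √(w_2(4w_2−3w_3)))/(3w_3) and α*_2 = 1 − 2α*_3 = (3w_3 − 4w_2 + 2√(w_2(4w_2−3w_3)))/(3w_3). Then the point (0, α*_2, α*_3) satisfies ∂G̃/∂α_2(0,α*_2,α*_3) = 0 and ∂G̃/∂α_3(0,α*_2,α*_3) = 0, where G̃(α_1,α_2,α_3) = α_1(1−α_1)w_1 + α_2(1−(α_1+α_2))w_2(1−α_1) + α_3(1−(α_1+α_2+α_3))w_3(1−α_1)(1−α_2) for any w_1 ∈ ℝ. -/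
import Mathlib


/-- Two-round durable-good revenue
`G̃(α₁,α₂) = α₁(1−α₁)w₁ + α₂(1−(α₁+α₂))w₂(1−α₁)` (initial stock `y₀ = 1`). -/
noncomputable def twoRoundRevenue (w₁ w₂ a₁ a₂ : ℝ) : ℝ :=
  a₁ * (1 - a₁) * w₁ + a₂ * (1 - (a₁ + a₂)) * w₂ * (1 - a₁)

/-- The interior critical first-round share
`α₁* = (−4w₁ + 3w₂ + 2√(w₁(4w₁−3w₂)))/(3w₂)`. -/
noncomputable def alpha1Star (w₁ w₂ : ℝ) : ℝ :=
  (-4 * w₁ + 3 * w₂ + 2 * Real.sqrt (w₁ * (4 * w₁ - 3 * w₂))) / (3 * w₂)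

/-- The interior critical second-round share
`α₂* = (2w₁ − √(w₁(4w₁−3w₂)))/(3w₂)`. -/
noncomputable def alpha2Star (w₁ w₂ : ℝ) : ℝ :=
  (2 * w₁ - Real.sqrt (w₁ * (4 * w₁ - 3 * w₂))) / (3 * w₂)

/-- Three-round durable-good revenue (initial stock `y₀ = 1`). -/
noncomputable def threeRoundRevenue (w₁ w₂ w₃ a₁ a₂ a₃ : ℝ) : ℝ :=
  a₁ * (1 - a₁) * w₁ + a₂ * (1 - (a₁ + a₂)) * w₂ * (1 - a₁) +
    a₃ * (1 - (a₁ + a₂ + a₃)) * w₃ * (1 - a₁) * (1 - a₂)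

private lemma quad_hasDerivAt (c₂ c₁ c₀ x : ℝ) :
    HasDerivAt (fun t : ℝ => c₂ * t ^ 2 + c₁ * t + c₀) (2 * c₂ * x + c₁) x := by
  have := (((hasDerivAt_pow 2 x).const_mul c₂).add ((hasDerivAt_id x).const_mul c₁)).add_const c₀
  simpa [mul_comm, mul_assoc, mul_left_comm] using this

/-- boundary case II.a of the `N = 3` example: first-round
share zero. With `α₃* = (2w₂ − √(w₂(4w₂−3w₃)))/(3w₃)` and `α₂* = 1 − 2α₃*`,
which also equals `(3w₃ − 4w₂ + 2√(w₂(4w₂−3w₃)))/(3w₃)`, the point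
`(0, α₂*, α₃*)` annihilates the partial derivatives in `α₂` and `α₃`. -/
theorem three_round_boundary_critical_point
    (w₁ w₂ w₃ : ℝ) (h₂ : 0 < w₂) (h₃ : 0 < w₃) (h : 3 * w₃ ≤ 4 * w₂) :
    (1 - 2 * alpha2Star w₂ w₃ =
        (3 * w₃ - 4 * w₂ + 2 * Real.sqrt (w₂ * (4 * w₂ - 3 * w₃))) / (3 * w₃)) ∧
      HasDerivAt
        (fun x : ℝ => threeRoundRevenue w₁ w₂ w₃ 0 x (alpha2Star w₂ w₃)) 0
        (1 - 2 * alpha2Star w₂ w₃) ∧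
      HasDerivAt
        (fun x : ℝ =>
          threeRoundRevenue w₁ w₂ w₃ 0 (1 - 2 * alpha2Star w₂ w₃) x) 0
        (alpha2Star w₂ w₃) := by
  set s := Real.sqrt (w₂ * (4 * w₂ - 3 * w₃)) with hs_def
  have hsq : s ^ 2 = w₂ * (4 * w₂ - 3 * w₃) := by
    rw [hs_def, sq, Real.mul_self_sqrt]
    exact mul_nonneg h₂.le (by linarith)
  have hw3 : (3 : ℝ) * w₃ ≠ 0 := by positivity
  set a₃ := alpha2Star w₂ w₃ with ha3_def
  have ha3 : a₃ = (2 * w₂ - s) / (3 * w₃) := rfl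
  have ha3' : a₃ * (3 * w₃) = 2 * w₂ - s := by
    rw [ha3]; field_simp
  refine ⟨by rw [ha3]; field_simp; ring, ?_, ?_⟩
  · -- derivative in α₂ at a₂ = 1 - 2a₃
    have key : HasDerivAt
        (fun x : ℝ => (-w₂ + a₃ * w₃) * x ^ 2 + (w₂ + a₃ * w₃ * (a₃ - 2)) * x
          + a₃ * w₃ * (1 - a₃)) (2 * (-w₂ + a₃ * w₃) * (1 - 2 * a₃) + (w₂ + a₃ * w₃ * (a₃ - 2)))
        (1 - 2 * a₃) := quad_hasDerivAt _ _ _ _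
    have hfun : (fun x : ℝ => threeRoundRevenue w₁ w₂ w₃ 0 x a₃) =
        (fun x : ℝ => (-w₂ + a₃ * w₃) * x ^ 2 + (w₂ + a₃ * w₃ * (a₃ - 2)) * x
          + a₃ * w₃ * (1 - a₃)) := by
      funext x; simp [threeRoundRevenue]; ring
    have hval : 2 * (-w₂ + a₃ * w₃) * (1 - 2 * a₃) + (w₂ + a₃ * w₃ * (a₃ - 2)) = 0 := by
      have h1 : a₃ = (2 * w₂ - s) / (3 * w₃) := ha3
      rw [h1]; field_simp; nlinarith [hsq]
    rw [hfun]; exact hval ▸ key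
  · -- derivative in α₃ at a₃
    have key : HasDerivAt
        (fun x : ℝ => (-(w₃ * (1 - (1 - 2 * a₃)))) * x ^ 2
          + (w₃ * (1 - (1 - 2 * a₃)) ^ 2) * x + (1 - 2 * a₃) * (1 - (1 - 2 * a₃)) * w₂)
        (2 * (-(w₃ * (1 - (1 - 2 * a₃)))) * a₃ + w₃ * (1 - (1 - 2 * a₃)) ^ 2) a₃ :=
      quad_hasDerivAt _ _ _ _
    have hfun : (fun x : ℝ => threeRoundRevenue w₁ w₂ w₃ 0 (1 - 2 * a₃) x) =
        (fun x : ℝ => (-(w₃ * (1 - (1 - 2 * a₃)))) * x ^ 2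
          + (w₃ * (1 - (1 - 2 * a₃)) ^ 2) * x + (1 - 2 * a₃) * (1 - (1 - 2 * a₃)) * w₂) := by
      funext x; simp [threeRoundRevenue]; ring
    have hval : 2 * (-(w₃ * (1 - (1 - 2 * a₃)))) * a₃ + w₃ * (1 - (1 - 2 * a₃)) ^ 2 = 0 := by
      ring
    rw [hfun]; exact hval ▸ key
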